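/- arXiv:0712.4001 — 4 statements merged into one kernel-verified Lean document; each statement's English description precedes it below -/
import Mathlib

section
/- For every real k > 0 and every t ∈ ℝ, the sum Σ_{i ∈ ℤ, θ_i < t} e^{−k(t−θ_i)} is at least e^{−2kω}/(1 − e^{−kω}). -/
/-- For every real `k > 0` and every `t ∈ ℝ`, the sum
`Σ_{i ∈ ℤ, θ_i < t} e^{−k(t−θ_i)}` is at least `e^{−2kω}/(1 − e^{−kω})`,
where `θ : ℤ → ℝ` satisfies condition (C4): `i·ω ≤ θ_i < (i+1)·ω` for all `i ∈ ℤ`. -/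
theorem stmt1 (ω : ℝ) (hω : 0 < ω) (θ : ℤ → ℝ)
    (hθ : ∀ i : ℤ, (i : ℝ) * ω ≤ θ i ∧ θ i < ((i : ℝ) + 1) * ω)
    (k : ℝ) (hk : 0 < k) (t : ℝ) :
    Real.exp (-(2 * k * ω)) / (1 - Real.exp (-k * ω))
      ≤ ∑' i : ℤ, if θ i < t then Real.exp (-k * (t - θ i)) else 0 := by
  set f : ℤ → ℝ := fun i => if θ i < t then Real.exp (-k * (t - θ i)) else 0 with hfdef
  have hf0 : ∀ i, 0 ≤ f i := by
    intro i; simp only [hfdef]; split <;> positivity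
  have hr1 : Real.exp (-k * ω) < 1 := by
    rw [Real.exp_lt_one_iff]; nlinarith
  have hr0 : (0:ℝ) ≤ Real.exp (-k * ω) := (Real.exp_pos _).le
  set m : ℤ := ⌊t / ω⌋ with hm
  have hmt : (m : ℝ) * ω ≤ t := by
    have h := Int.floor_le (t / ω)
    calc (m : ℝ) * ω ≤ (t / ω) * ω := by nlinarith
      _ = t := by field_simp
  have htm : t < ((m : ℝ) + 1) * ω := by
    have h := Int.lt_floor_add_one (t / ω)
    calc t = (t / ω) * ω := by field_simp
      _ < ((m : ℝ) + 1) * ω := by nlinarith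
  -- summability
  have hsum : Summable f := by
    apply Summable.of_nat_of_neg_add_one
    · apply summable_of_ne_finset_zero (s := Finset.range (m.toNat + 1))
      intro n hn
      simp only [Finset.mem_range, not_lt] at hn
      have h1 : (m : ℝ) + 1 ≤ (n : ℤ) := by
        have : m + 1 ≤ (n : ℤ) := by omega
        exact_mod_cast this
      have : t ≤ θ (n : ℤ) := by
        have h2 := (hθ (n : ℤ)).1
        push_cast at h1 h2 ⊢
        nlinarith [mul_le_mul_of_nonneg_right h1 hω.le]
      simp only [hfdef, if_neg (not_lt.mpr this)]
    · refine Summable.of_nonneg_of_le (f := fun n : ℕ => Real.exp (-k * t) * Real.exp (-k * ω) ^ n)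
        (fun n => hf0 _) (fun n => ?_) ((summable_geometric_of_lt_one hr0 hr1).mul_left _)
      ·
        simp only [hfdef]
        split
        · rw [← Real.exp_nat_mul, ← Real.exp_add]
          apply Real.exp_le_exp.mpr
          have h2 := (hθ (-(n + 1 : ℕ) : ℤ)).2
          push_cast at h2 ⊢
          nlinarith
        · positivity
  -- geometric lower bound
  have key : (∑' j : ℕ, Real.exp (-(2 * k * ω)) * Real.exp (-k * ω) ^ j) ≤ ∑' i : ℤ, f i := by
    apply Summable.tsum_le_tsum_of_inj (fun j : ℕ => m - 1 - (j : ℤ))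
    · intro a b hab
      have h := sub_right_injective hab
      exact_mod_cast h
    · intro c _; exact hf0 c
    · intro j
      have h1 := (hθ (m - 1 - (j : ℤ))).1
      have h2 := (hθ (m - 1 - (j : ℤ))).2
      push_cast at h1 h2
      have hlt : θ (m - 1 - (j : ℤ)) < t := by nlinarith [Nat.cast_nonneg (α := ℝ) j]
      simp only [hfdef, if_pos hlt]
      rw [← Real.exp_nat_mul, ← Real.exp_add]
      apply Real.exp_le_exp.mpr
      nlinarith
    · exact (summable_geometric_of_lt_one hr0 hr1).mul_left _
    · exact hsum
  calc Real.exp (-(2 * k * ω)) / (1 - Real.exp (-k * ω))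
      = ∑' j : ℕ, Real.exp (-(2 * k * ω)) * Real.exp (-k * ω) ^ j := by
        rw [tsum_mul_left, tsum_geometric_of_lt_one hr0 hr1, div_eq_mul_inv]
    _ ≤ ∑' i : ℤ, f i := key
end

section
/- For every bounded Lebesgue-measurable φ : ℝ → ℝ^{m+1} and every t ∈ ℝ, one has |(Tφ)₀(t)| ≤ m₀/k₀ + (I₀ + m_J)·e^{k₀ω}/(1 − e^{−k₀ω}) and |(Tφ)_j(t)| ≤ m_j/k_j for j = 1,…,m; in particular T maps bounded measurable functions into the set Ω. -/
/-- The Euclidean norm on `Fin n → ℝ`. -/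
noncomputable def eNorm {n : ℕ} (v : Fin n → ℝ) : ℝ := Real.sqrt (∑ j, v j ^ 2)

/-- The operator `T` of the paper: coordinate `0` (the systemic arterial pressure) gets
`(Tφ)₀(t) = −∫_{−∞}^t e^{−k₀(t−s)} g₀(φ₀(s)−φ₁(s),…,φ₀(s)−φ_m(s)) ds
  + Σ_{θ_i < t} e^{−k₀(t−θ_i)} (I₀ + J₀(φ₀(θ_i)))`,
and the compartment coordinates `j = 1,…,m` (nonzero indices of `Fin (m+1)`) get
`(Tφ)_j(t) = ∫_{−∞}^t e^{−k_j(t−s)} g_j(φ₀(s)−φ_j(s)) ds`. -/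
noncomputable def Tmap (m : ℕ) (θ : ℤ → ℝ) (k : Fin (m + 1) → ℝ) (I₀ : ℝ)
    (g₀ : (Fin m → ℝ) → ℝ) (g : Fin (m + 1) → ℝ → ℝ) (J₀ : ℝ → ℝ)
    (φ : ℝ → Fin (m + 1) → ℝ) : ℝ → Fin (m + 1) → ℝ := fun t j =>
  if j = 0 then
    -(∫ s in Set.Iic t, Real.exp (-(k 0) * (t - s)) * g₀ (fun i => φ s 0 - φ s i.succ))
      + ∑' i : ℤ, (if θ i < t then Real.exp (-(k 0) * (t - θ i)) * (I₀ + J₀ (φ (θ i) 0)) else 0)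
  else
    ∫ s in Set.Iic t, Real.exp (-(k j) * (t - s)) * g j (φ s 0 - φ s j)

/-- The set `Ω`: bounded measurable functions `φ : ℝ → ℝ^{m+1}` with
`|φ₀(t)| ≤ m₀/k₀ + (I₀ + m_J)·e^{k₀ω}/(1 − e^{−k₀ω})` and `|φ_j(t)| ≤ m_j/k_j`. -/
def OmegaSet (m : ℕ) (ω : ℝ) (k mc : Fin (m + 1) → ℝ) (I₀ mJ : ℝ) :
    Set (ℝ → Fin (m + 1) → ℝ) :=
  {φ | Measurable φ ∧ (∃ B, ∀ t, eNorm (φ t) ≤ B) ∧ ∀ t,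
    |φ t 0| ≤ mc 0 / k 0 + (I₀ + mJ) * Real.exp (k 0 * ω) / (1 - Real.exp (-(k 0) * ω)) ∧
    ∀ j, j ≠ 0 → |φ t j| ≤ mc j / k j}

/-!
The bounds on `Tφ` hold pointwise because `g₀`, `g_j` and `J₀` are bounded. The convolution
integrals are at most `M/k`, since `∫_{-∞}^t e^{-k(t-s)} ds = 1/k`. For the impulse sum, `θ_i < t`
forces `i ≤ ⌊t/ω⌋`, and the impulse with index `⌊t/ω⌋ - j` lies at least `(j - 1)ω` in the past,
so the sum is dominated by the geometric series `Σ_j e^{kω} e^{-jkω} = e^{kω}/(1 - e^{-kω})`.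
Measurability of `Tφ` comes from measurability of parametric integrals and of countable sums, the
Lipschitz functions `g₀`, `g_j` being continuous.
-/

open MeasureTheory Real Set

lemma exp_neg_mul_sub (c t s : ℝ) : exp (-c * (t - s)) = exp (-c * t) * exp (c * s) := by
  rw [← exp_add]; ring_nf

lemma integrableOn_exp_neg_mul_sub_Iic {c : ℝ} (hc : 0 < c) (t : ℝ) :
    IntegrableOn (fun s => exp (-c * (t - s))) (Iic t) := by
  simp_rw [exp_neg_mul_sub]
  exact (integrableOn_exp_mul_Iic hc t).const_mul _

lemma integral_exp_neg_mul_sub_Iic {c : ℝ} (hc : 0 < c) (t : ℝ) :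
    ∫ s in Iic t, exp (-c * (t - s)) = 1 / c := by
  simp_rw [exp_neg_mul_sub]
  rw [integral_const_mul, integral_exp_mul_Iic hc, mul_div_assoc', ← exp_add]
  simp

lemma abs_setIntegral_Iic_exp_neg_mul_sub_mul_le {c M : ℝ} (hc : 0 < c) {h : ℝ → ℝ}
    (hh : ∀ s, |h s| ≤ M) (t : ℝ) :
    |∫ s in Iic t, exp (-c * (t - s)) * h s| ≤ M / c := by
  rw [← norm_eq_abs]
  calc ‖∫ s in Iic t, exp (-c * (t - s)) * h s‖
      ≤ ∫ s in Iic t, M * exp (-c * (t - s)) := by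
        refine norm_integral_le_of_norm_le ((integrableOn_exp_neg_mul_sub_Iic hc t).const_mul M)
          (ae_of_all _ fun s => ?_)
        rw [norm_mul, norm_of_nonneg (exp_pos _).le, mul_comm]
        exact mul_le_mul_of_nonneg_right (hh s) (exp_pos _).le
    _ = M / c := by rw [integral_const_mul, integral_exp_neg_mul_sub_Iic hc, mul_one_div]

lemma measurable_setIntegral_Iic {F : ℝ → ℝ → ℝ} (hF : Measurable (Function.uncurry F)) :
    Measurable fun t => ∫ s in Iic t, F t s := by
  have hind : (fun t => ∫ s in Iic t, F t s)
      = fun t => ∫ s, (fun p : ℝ × ℝ => if p.2 ≤ p.1 then F p.1 p.2 else 0) (t, s) := by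
    funext t
    rw [← integral_indicator measurableSet_Iic]
    simp [indicator_apply]
  have hG : StronglyMeasurable fun p : ℝ × ℝ => if p.2 ≤ p.1 then F p.1 p.2 else 0 :=
    (Measurable.ite (measurableSet_le measurable_snd measurable_fst) hF
      measurable_const).stronglyMeasurable
  rw [hind]
  exact (hG.integral_prod_right' (ν := volume)).measurable

section Impulses

variable {ω : ℝ} {θ : ℤ → ℝ}

lemma le_floor_div_of_lt (hω : 0 < ω) (hθ : ∀ i : ℤ, (i : ℝ) * ω ≤ θ i) {i : ℤ} {t : ℝ}
    (hi : θ i < t) : i ≤ ⌊t / ω⌋ :=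
  Int.le_floor.2 ((le_div_iff₀ hω).2 ((hθ i).trans hi.le))

lemma sub_one_mul_lt_sub_floor_div_sub (hω : 0 < ω) (hθ : ∀ i : ℤ, θ i < ((i : ℝ) + 1) * ω)
    (t : ℝ) (j : ℕ) : ((j : ℝ) - 1) * ω < t - θ (⌊t / ω⌋ - j) := by
  have hfloor : (⌊t / ω⌋ : ℝ) * ω ≤ t := (le_div_iff₀ hω).1 (Int.floor_le _)
  have := hθ (⌊t / ω⌋ - j)
  push_cast at this
  linarith

lemma abs_tsum_impulses_le (hω : 0 < ω)
    (hθ : ∀ i : ℤ, (i : ℝ) * ω ≤ θ i ∧ θ i < ((i : ℝ) + 1) * ω) {k C : ℝ} (hk : 0 < k)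
    {u : ℤ → ℝ} (hu : ∀ i, |u i| ≤ C) (t : ℝ) :
    |∑' i, if θ i < t then exp (-k * (t - θ i)) * u i else 0|
      ≤ C * exp (k * ω) / (1 - exp (-k * ω)) := by
  set f : ℤ → ℝ := fun i => if θ i < t then exp (-k * (t - θ i)) * u i else 0
  set N := ⌊t / ω⌋
  have hinj : Function.Injective fun j : ℕ => N - j := fun a b hab => by simpa using hab
  have hsupp : Function.support f ⊆ range fun j : ℕ => N - j := by
    intro i hi
    have hit : θ i < t := by_contra fun h => hi (if_neg h)
    have hiN := le_floor_div_of_lt hω (fun i => (hθ i).1) hit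
    exact ⟨(N - i).toNat, by simp only; omega⟩
  have hr : exp (-k * ω) < 1 := exp_lt_one_iff.2 (by nlinarith)
  have hterm : ∀ j : ℕ, ‖f (N - j)‖ ≤ C * exp (k * ω) * exp (-k * ω) ^ j := by
    intro j
    have hC : 0 ≤ C := (abs_nonneg _).trans (hu 0)
    by_cases hit : θ (N - j) < t
    · have hdecay : exp (-k * (t - θ (N - j))) ≤ exp (k * ω) * exp (-k * ω) ^ j := by
        rw [← exp_nat_mul, ← exp_add, exp_le_exp]
        nlinarith [sub_one_mul_lt_sub_floor_div_sub hω (fun i => (hθ i).2) t j]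
      simp only [f, norm_eq_abs, if_pos hit]
      rw [abs_mul, abs_of_pos (exp_pos _), mul_comm C, mul_right_comm]
      exact mul_le_mul hdecay (hu _) (abs_nonneg _) (by positivity)
    · simp only [f, if_neg hit, norm_zero]
      positivity
  rw [← hinj.tsum_eq hsupp]
  refine (tsum_of_norm_bounded ((hasSum_geometric_of_lt_one (exp_pos _).le hr).mul_left _)
    hterm).trans_eq ?_
  rw [div_eq_mul_inv]

end Impulses

lemma eNorm_le_sqrt_sum_sq {n : ℕ} {v b : Fin n → ℝ} (h : ∀ j, |v j| ≤ b j) :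
    eNorm v ≤ √(∑ j, b j ^ 2) :=
  sqrt_le_sqrt (Finset.sum_le_sum fun j _ => sq_le_sq' (abs_le.1 (h j)).1 (abs_le.1 (h j)).2)

lemma continuous_of_abs_sub_le_mul_eNorm {n : ℕ} {f : (Fin n → ℝ) → ℝ} {L : ℝ}
    (h : ∀ z w, |f z - f w| ≤ L * eNorm (fun i => z i - w i)) : Continuous f := by
  have hlip : LipschitzWith L.toNNReal fun x : EuclideanSpace ℝ (Fin n) => f x.ofLp := by
    refine LipschitzWith.of_dist_le' fun x y => ?_
    simpa [EuclideanSpace.dist_eq, Real.dist_eq, eNorm] using h x.ofLp y.ofLp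
  exact hlip.continuous.comp (PiLp.continuous_toLp 2 _)

section Tmap

variable {m : ℕ} {θ : ℤ → ℝ} {k : Fin (m + 1) → ℝ} {I₀ : ℝ} {g₀ : (Fin m → ℝ) → ℝ}
  {g : Fin (m + 1) → ℝ → ℝ} {J₀ : ℝ → ℝ}

lemma abs_Tmap_zero_le {ω : ℝ} (hω : 0 < ω)
    (hθ : ∀ i : ℤ, (i : ℝ) * ω ≤ θ i ∧ θ i < ((i : ℝ) + 1) * ω) (hk : 0 < k 0) (hI : 0 ≤ I₀)
    {M₀ MJ : ℝ} (hg₀ : ∀ z, |g₀ z| ≤ M₀) (hJ : ∀ a, |J₀ a| ≤ MJ) (φ : ℝ → Fin (m + 1) → ℝ)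
    (t : ℝ) :
    |Tmap m θ k I₀ g₀ g J₀ φ t 0|
      ≤ M₀ / k 0 + (I₀ + MJ) * exp (k 0 * ω) / (1 - exp (-(k 0) * ω)) := by
  have himpulse : ∀ i, |I₀ + J₀ (φ (θ i) 0)| ≤ I₀ + MJ := fun i =>
    (abs_add_le _ _).trans (by rw [abs_of_nonneg hI]; exact add_le_add le_rfl (hJ _))
  simp only [Tmap, if_pos]
  refine (abs_add_le _ _).trans (add_le_add ?_ (abs_tsum_impulses_le hω hθ hk himpulse t))
  rw [abs_neg]
  exact abs_setIntegral_Iic_exp_neg_mul_sub_mul_le hk (fun s => hg₀ _) t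

lemma abs_Tmap_le {j : Fin (m + 1)} (hj : j ≠ 0) (hk : 0 < k j) {M : ℝ}
    (hg : ∀ a, |g j a| ≤ M) (φ : ℝ → Fin (m + 1) → ℝ) (t : ℝ) :
    |Tmap m θ k I₀ g₀ g J₀ φ t j| ≤ M / k j := by
  simp only [Tmap, if_neg hj]
  exact abs_setIntegral_Iic_exp_neg_mul_sub_mul_le hk (fun s => hg _) t

lemma measurable_Tmap (hg₀ : Measurable g₀) (hg : ∀ j, j ≠ 0 → Measurable (g j))
    {φ : ℝ → Fin (m + 1) → ℝ} (hφ : Measurable φ) : Measurable (Tmap m θ k I₀ g₀ g J₀ φ) := by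
  refine measurable_pi_lambda _ fun j => ?_
  by_cases hj : j = 0
  · subst hj
    simp only [Tmap, if_pos]
    refine (measurable_setIntegral_Iic ?_).neg.add (Measurable.tsum fun i => ?_)
    · exact (by fun_prop : Measurable fun p : ℝ × ℝ => exp (-k 0 * (p.1 - p.2))).mul
        (hg₀.comp (measurable_pi_lambda _ fun i => by fun_prop))
    · exact Measurable.ite (measurableSet_Ioi (a := θ i)) (by fun_prop) measurable_const
  · simp only [Tmap, if_neg hj]
    refine measurable_setIntegral_Iic ?_
    exact (by fun_prop : Measurable fun p : ℝ × ℝ => exp (-k j * (p.1 - p.2))).mul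
      ((hg j hj).comp (by fun_prop))

end Tmap

theorem stmt2_general
    (m : ℕ) (ω : ℝ) (hω : 0 < ω) (θ : ℤ → ℝ)
    (hθ : ∀ i : ℤ, (i : ℝ) * ω ≤ θ i ∧ θ i < ((i : ℝ) + 1) * ω)
    (k : Fin (m + 1) → ℝ) (hk : ∀ j, 0 < k j) (I₀ : ℝ) (hI : 0 < I₀)
    (g₀ : (Fin m → ℝ) → ℝ) (g : Fin (m + 1) → ℝ → ℝ) (J₀ : ℝ → ℝ)
    (l : Fin (m + 1) → ℝ) (mc : Fin (m + 1) → ℝ) (mJ : ℝ)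
    (hg₀lip : ∀ z w : Fin m → ℝ, |g₀ z - g₀ w| ≤ l 0 * eNorm (fun i => z i - w i))
    (hglip : ∀ j, j ≠ 0 → ∀ a b : ℝ, |g j a - g j b| ≤ l j * |a - b|)
    (hg₀bd : ∀ z, |g₀ z| ≤ mc 0)
    (hgbd : ∀ j, j ≠ 0 → ∀ a, |g j a| ≤ mc j)
    (hJbd : ∀ a, |J₀ a| ≤ mJ)
    (φ : ℝ → Fin (m + 1) → ℝ) (hφmeas : Measurable φ) :
    (∀ t : ℝ,
      |Tmap m θ k I₀ g₀ g J₀ φ t 0| ≤ mc 0 / k 0 + (I₀ + mJ) * Real.exp (k 0 * ω) / (1 - Real.exp (-(k 0) * ω)) ∧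
      ∀ j, j ≠ 0 → |Tmap m θ k I₀ g₀ g J₀ φ t j| ≤ mc j / k j) ∧
    Tmap m θ k I₀ g₀ g J₀ φ ∈ OmegaSet m ω k mc I₀ mJ := by
  set R₀ := mc 0 / k 0 + (I₀ + mJ) * Real.exp (k 0 * ω) / (1 - Real.exp (-(k 0) * ω))
  have hbound : ∀ t : ℝ, |Tmap m θ k I₀ g₀ g J₀ φ t 0| ≤ R₀ ∧
      ∀ j, j ≠ 0 → |Tmap m θ k I₀ g₀ g J₀ φ t j| ≤ mc j / k j := fun t =>
    ⟨abs_Tmap_zero_le hω hθ (hk 0) hI.le hg₀bd hJbd φ t,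
      fun j hj => abs_Tmap_le hj (hk j) (hgbd j hj) φ t⟩
  have hg₀ : Measurable g₀ := (continuous_of_abs_sub_le_mul_eNorm hg₀lip).measurable
  have hg : ∀ j, j ≠ 0 → Measurable (g j) := fun j hj =>
    (LipschitzWith.of_dist_le' (by simpa [Real.dist_eq] using hglip j hj)).continuous.measurable
  refine ⟨hbound, measurable_Tmap hg₀ hg hφmeas, ⟨_, fun t => eNorm_le_sqrt_sum_sq
    (b := fun j => if j = 0 then R₀ else mc j / k j) fun j => ?_⟩, hbound⟩
  by_cases hj : j = 0
  · subst hj; simpa using (hbound t).1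
  · simpa [hj] using (hbound t).2 j hj

/-- For every bounded Lebesgue-measurable `φ : ℝ → ℝ^{m+1}` and every `t ∈ ℝ`,
`|(Tφ)₀(t)| ≤ m₀/k₀ + (I₀ + m_J)·e^{k₀ω}/(1 − e^{−k₀ω})` and `|(Tφ)_j(t)| ≤ m_j/k_j`
for `j = 1,…,m`; in particular `T` maps bounded measurable functions into the set `Ω`. -/
theorem stmt2
    (m : ℕ) (hm : 1 ≤ m) (ω : ℝ) (hω : 0 < ω) (θ : ℤ → ℝ)
    (hθ : ∀ i : ℤ, (i : ℝ) * ω ≤ θ i ∧ θ i < ((i : ℝ) + 1) * ω)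
    (k : Fin (m + 1) → ℝ) (hk : ∀ j, 0 < k j) (I₀ : ℝ) (hI : 0 < I₀)
    (g₀ : (Fin m → ℝ) → ℝ) (g : Fin (m + 1) → ℝ → ℝ) (J₀ : ℝ → ℝ)
    (l : Fin (m + 1) → ℝ) (lJ : ℝ) (mc : Fin (m + 1) → ℝ) (mJ : ℝ)
    (hl : ∀ j, 0 ≤ l j) (hlJ : 0 ≤ lJ) (hmc : ∀ j, 0 ≤ mc j) (hmJ : 0 ≤ mJ)
    (hg₀lip : ∀ z w : Fin m → ℝ, |g₀ z - g₀ w| ≤ l 0 * eNorm (fun i => z i - w i))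
    (hglip : ∀ j, j ≠ 0 → ∀ a b : ℝ, |g j a - g j b| ≤ l j * |a - b|)
    (hJlip : ∀ a b : ℝ, |J₀ a - J₀ b| ≤ lJ * |a - b|)
    (hg₀bd : ∀ z, |g₀ z| ≤ mc 0)
    (hgbd : ∀ j, j ≠ 0 → ∀ a, |g j a| ≤ mc j)
    (hJbd : ∀ a, |J₀ a| ≤ mJ)
    (φ : ℝ → Fin (m + 1) → ℝ) (hφmeas : Measurable φ)
    (hφbd : ∃ B, ∀ t, eNorm (φ t) ≤ B) :
    (∀ t : ℝ,
      |Tmap m θ k I₀ g₀ g J₀ φ t 0| ≤ mc 0 / k 0 + (I₀ + mJ) * Real.exp (k 0 * ω) / (1 - Real.exp (-(k 0) * ω)) ∧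
      ∀ j, j ≠ 0 → |Tmap m θ k I₀ g₀ g J₀ φ t j| ≤ mc j / k j) ∧
    Tmap m θ k I₀ g₀ g J₀ φ ∈ OmegaSet m ω k mc I₀ mJ :=
  stmt2_general m ω hω θ hθ k hk I₀ hI g₀ g J₀ l mc mJ hg₀lip hglip hg₀bd hgbd hJbd φ hφmeas
end

section
/- Let p ≥ 1 be an integer and suppose the sequence θ has the p-property: θ_{i+p} = θ_i + p·ω for all i ∈ ℤ. If φ : ℝ → ℝ^{m+1} is bounded, measurable and pω-periodic (φ(t + pω) = φ(t) for all t), then Tφ is pω-periodic: (Tφ)(t + pω) = (Tφ)(t) for all t ∈ ℝ. -/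
/-- Let `p ≥ 1` and suppose `θ` has the `p`-property: `θ_{i+p} = θ_i + p·ω`
for all `i ∈ ℤ`. If `φ` is bounded, measurable and `pω`-periodic, then `Tφ` is `pω`-periodic. -/
theorem stmt5
    (m : ℕ) (hm : 1 ≤ m) (ω : ℝ) (hω : 0 < ω) (θ : ℤ → ℝ)
    (hθ : ∀ i : ℤ, (i : ℝ) * ω ≤ θ i ∧ θ i < ((i : ℝ) + 1) * ω)
    (k : Fin (m + 1) → ℝ) (hk : ∀ j, 0 < k j) (I₀ : ℝ) (hI : 0 < I₀)
    (g₀ : (Fin m → ℝ) → ℝ) (g : Fin (m + 1) → ℝ → ℝ) (J₀ : ℝ → ℝ)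
    (l : Fin (m + 1) → ℝ) (lJ : ℝ) (mc : Fin (m + 1) → ℝ) (mJ : ℝ)
    (hl : ∀ j, 0 ≤ l j) (hlJ : 0 ≤ lJ) (hmc : ∀ j, 0 ≤ mc j) (hmJ : 0 ≤ mJ)
    (hg₀lip : ∀ z w : Fin m → ℝ, |g₀ z - g₀ w| ≤ l 0 * eNorm (fun i => z i - w i))
    (hglip : ∀ j, j ≠ 0 → ∀ a b : ℝ, |g j a - g j b| ≤ l j * |a - b|)
    (hJlip : ∀ a b : ℝ, |J₀ a - J₀ b| ≤ lJ * |a - b|)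
    (hg₀bd : ∀ z, |g₀ z| ≤ mc 0)
    (hgbd : ∀ j, j ≠ 0 → ∀ a, |g j a| ≤ mc j)
    (hJbd : ∀ a, |J₀ a| ≤ mJ)
    (p : ℕ) (hp : 1 ≤ p) (hθp : ∀ i : ℤ, θ (i + (p : ℤ)) = θ i + (p : ℝ) * ω)
    (φ : ℝ → Fin (m + 1) → ℝ) (hφmeas : Measurable φ)
    (hφbd : ∃ B, ∀ t, eNorm (φ t) ≤ B)
    (hφper : ∀ t : ℝ, φ (t + (p : ℝ) * ω) = φ t) :
    ∀ t : ℝ, Tmap m θ k I₀ g₀ g J₀ φ (t + (p : ℝ) * ω) = Tmap m θ k I₀ g₀ g J₀ φ t := by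

  intro t
  set T := (p : ℝ) * ω with hT
  have key : ∀ (c : ℝ) (F : ℝ → ℝ),
      (∫ s in Set.Iic (t + T), Real.exp (-c * (t + T - s)) * F s)
        = ∫ s in Set.Iic t, Real.exp (-c * (t - s)) * F (s + T) := by
    intro c F
    rw [← MeasureTheory.integral_indicator measurableSet_Iic,
        ← MeasureTheory.integral_indicator measurableSet_Iic,
        ← MeasureTheory.integral_add_right_eq_self
          (fun s => Set.indicator (Set.Iic (t + T))
            (fun s => Real.exp (-c * (t + T - s)) * F s) s) T]
    congr 1; funext s
    by_cases h : s ≤ t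
    · rw [Set.indicator_of_mem (by simpa using h),
        Set.indicator_of_mem (by simpa using h)]
      have : t + T - (s + T) = t - s := by ring
      rw [this]
    · rw [Set.indicator_of_notMem (by simpa using h),
        Set.indicator_of_notMem (by simpa using h)]
  funext j
  by_cases hj : j = 0
  · subst hj
    simp only [Tmap, if_pos rfl]
    have h1 : (∫ s in Set.Iic (t + T),
          Real.exp (-(k 0) * (t + T - s)) * g₀ (fun i => φ s 0 - φ s i.succ))
        = ∫ s in Set.Iic t,
          Real.exp (-(k 0) * (t - s)) * g₀ (fun i => φ s 0 - φ s i.succ) := by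
      rw [key (k 0) (fun s => g₀ (fun i => φ s 0 - φ s i.succ))]
      congr 1; funext s; rw [hφper s]
    have h2 : (∑' i : ℤ, (if θ i < t + T then
          Real.exp (-(k 0) * (t + T - θ i)) * (I₀ + J₀ (φ (θ i) 0)) else 0))
        = ∑' i : ℤ, (if θ i < t then
          Real.exp (-(k 0) * (t - θ i)) * (I₀ + J₀ (φ (θ i) 0)) else 0) := by
      rw [← Equiv.tsum_eq (Equiv.addRight (p : ℤ)) (fun i => if θ i < t + T then
          Real.exp (-(k 0) * (t + T - θ i)) * (I₀ + J₀ (φ (θ i) 0)) else 0)]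
      congr 1; funext i
      have he : (Equiv.addRight (p : ℤ)) i = i + (p : ℤ) := rfl
      simp only [he, hθp i, ← hT]
      by_cases h : θ i < t
      · rw [if_pos (by linarith), if_pos h]
        have h3 : t + T - (θ i + T) = t - θ i := by ring
        rw [h3, hφper (θ i)]
      · rw [if_neg (by linarith), if_neg h]
    rw [h1, h2]
    simp
  · simp only [Tmap, if_neg hj]
    rw [key (k j) (fun s => g j (φ s 0 - φ s j))]
    congr 1; funext s; rw [hφper s]
end

section
/- There exists a constant C ≥ 0, depending only on m, ω, k₀,…,k_m, l₀,…,l_m, l_J, m₀,…,m_m, m_J and I₀ (and not on p, ε, φ, T₁, T₂, t), with the following property. Let p ≥ 1 be an integer, ε ∈ (0, ω/4), φ ∈ Ω, and T₁ < T₂ be reals such that: (i) for every i ∈ ℤ with θ_i ≥ T₁, |θ_{i+p} − θ_i − p·ω| < ε and ‖φ(θ_{i+p}) − φ(θ_i)‖ < ε; (ii) for every s ≥ T₁ such that θ_i + ε < s < θ_{i+1} − ε for some i ∈ ℤ, one has θ_{i+p} < s + pω < θ_{i+p+1} and ‖φ(s + pω) − φ(s)‖ < ε; (iii) 2e^{−k₀(T₂−T₁)}·(m₀/k₀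 + (I₀ + m_J)·e^{k₀ω}/(1 − e^{−k₀ω})) < ε and 4e^{−k_j(T₂−T₁)}·m_j/k_j < ε for j = 1,…,m. Then for every t ≥ T₂ with θ_i + ε < t < θ_{i+1} − ε for some i ∈ ℤ, one has ‖(Tφ)(t + pω) − (Tφ)(t)‖ ≤ C·ε. (This is the key estimate in the proof of assertion 2 of Theorem 1, on eventually pω-periodic solutions.) -/
open MeasureTheory Set Real

lemma abs_exp_sub_one_le_mul_exp_abs (x : ℝ) : |exp x - 1| ≤ |x| * exp |x| := by
  rcases le_or_gt 0 x with hx | hx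
  · rw [abs_of_nonneg hx, abs_of_nonneg (by linarith [add_one_le_exp x])]
    nlinarith [add_one_le_exp (-x), exp_pos x, exp_neg x, mul_inv_cancel₀ (exp_pos x).ne']
  · rw [abs_of_neg hx, abs_of_nonpos (by linarith [exp_lt_one_iff.2 hx])]
    nlinarith [add_one_le_exp x, one_le_exp (neg_pos.2 hx).le]

noncomputable def geomConst (k ω : ℝ) : ℝ := exp (k * ω) / (1 - exp (-k * ω))

lemma geomConst_pos {k ω : ℝ} (hk : 0 < k) (hω : 0 < ω) : 0 < geomConst k ω := by
  have : exp (-k * ω) < 1 := exp_lt_one_iff.2 (by nlinarith)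
  unfold geomConst
  exact div_pos (exp_pos _) (by linarith)

noncomputable def expWeight (k : ℝ) (θ : ℤ → ℝ) (a t : ℝ) (i : ℤ) : ℝ :=
  if θ i ≤ a then exp (-k * (t - θ i)) else 0

lemma expWeight_nonneg (k : ℝ) (θ : ℤ → ℝ) (a t : ℝ) (i : ℤ) : 0 ≤ expWeight k θ a t i := by
  unfold expWeight
  split <;> positivity

def IsImpulseSeq (ω : ℝ) (θ : ℤ → ℝ) : Prop :=
  ∀ i : ℤ, (i : ℝ) * ω ≤ θ i ∧ θ i < ((i : ℝ) + 1) * ω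

namespace IsImpulseSeq

variable {ω : ℝ} {θ : ℤ → ℝ}

lemma strictMono (hθ : IsImpulseSeq ω θ) : StrictMono θ :=
  strictMono_int_of_lt_succ fun i => by
    have := (hθ (i + 1)).1
    push_cast at this
    linarith [(hθ i).2]

lemma le_floor (hθ : IsImpulseSeq ω θ) (hω : 0 < ω) {i : ℤ} {a : ℝ} (h : θ i ≤ a) :
    i ≤ ⌊a / ω⌋ :=
  Int.le_floor.2 ((le_div_iff₀ hω).2 ((hθ i).1.trans h))

lemma ceil_le (hθ : IsImpulseSeq ω θ) (hω : 0 < ω) {i : ℤ} {a : ℝ} (h : a ≤ θ i) :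
    ⌈a / ω⌉ ≤ i + 1 :=
  Int.ceil_le.2 <| (div_le_iff₀ hω).2 <| by push_cast; linarith [(hθ i).2]

lemma exists_le_lt_succ (hθ : IsImpulseSeq ω θ) (hω : 0 < ω) (s : ℝ) :
    ∃ i, θ i ≤ s ∧ s < θ (i + 1) := by
  set N := ⌊s / ω⌋
  have hN : (N : ℝ) * ω ≤ s := (le_div_iff₀ hω).1 (Int.floor_le _)
  have hN' : s < ((N : ℝ) + 1) * ω := (div_lt_iff₀ hω).1 (Int.lt_floor_add_one _)
  by_cases h : θ N ≤ s
  · refine ⟨N, h, ?_⟩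
    have := (hθ (N + 1)).1
    push_cast at this
    linarith
  · refine ⟨N - 1, ?_, by simpa using not_le.1 h⟩
    have := (hθ (N - 1)).2
    push_cast at this
    linarith

lemma exists_abs_sub_le_of_notMem_gap (hθ : IsImpulseSeq ω θ) (hω : 0 < ω) {ε s : ℝ}
    (h : ∀ i, θ i + ε < s → ¬ s < θ (i + 1) - ε) : ∃ i, |s - θ i| ≤ ε := by
  obtain ⟨i, hi, hi'⟩ := hθ.exists_le_lt_succ hω s
  by_cases hs : θ i + ε < s
  · have := not_lt.1 (h i hs)
    exact ⟨i + 1, abs_le.2 ⟨by linarith, by linarith⟩⟩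
  · exact ⟨i, abs_le.2 ⟨by linarith, by linarith [not_lt.1 hs]⟩⟩

lemma lt_abs_sub_of_mem_gap (hθ : IsImpulseSeq ω θ) {ε t : ℝ} {i₀ : ℤ} (h₁ : θ i₀ + ε < t)
    (h₂ : t < θ (i₀ + 1) - ε) (i : ℤ) : ε < |θ i - t| := by
  rcases le_or_gt i i₀ with hi | hi
  · have := hθ.strictMono.monotone hi
    exact lt_abs.2 (Or.inr (by linarith))
  · have := hθ.strictMono.monotone (Int.add_one_le_iff.2 hi)
    exact lt_abs.2 (Or.inl (by linarith))

lemma abs_sub_sub_lt (hθ : IsImpulseSeq ω θ) (i p : ℤ) : |θ (i + p) - θ i - p * ω| < ω := by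
  have h₁ := hθ i
  have h₂ := hθ (i + p)
  push_cast at h₂
  exact abs_lt.2 ⟨by nlinarith, by nlinarith⟩

lemma finite_setOf_mem_Icc (hθ : IsImpulseSeq ω θ) (hω : 0 < ω) (a b : ℝ) :
    {i | θ i ∈ Icc a b}.Finite :=
  (Set.finite_Icc (⌈a / ω⌉ - 1) ⌊b / ω⌋).subset fun i hi =>
    ⟨by linarith [hθ.ceil_le hω hi.1], hθ.le_floor hω hi.2⟩

/-- The `θᵢ ≤ a` lie in distinct cells below `⌊a/ω⌋ + 1`, so the sum is dominated by
`e^{kω} ∑ₙ e^{−nkω} = geomConst k ω`. -/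
lemma sum_exp_le (hθ : IsImpulseSeq ω θ) (hω : 0 < ω) {k : ℝ} (hk : 0 < k) {a : ℝ}
    (I : Finset ℤ) (hI : ∀ i ∈ I, θ i ≤ a) (t : ℝ) :
    ∑ i ∈ I, exp (-k * (t - θ i)) ≤ exp (-k * (t - a)) * geomConst k ω := by
  set N := ⌊a / ω⌋
  set r := exp (-k * ω)
  have hr : r < 1 := exp_lt_one_iff.2 (by nlinarith)
  have hgeom : Summable fun n : ℕ => exp (-k * (t - a)) * exp (k * ω) * r ^ n :=
    (summable_geometric_of_lt_one (exp_nonneg _) hr).mul_left _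
  have hterm : ∀ i ∈ I,
      exp (-k * (t - θ i)) ≤ exp (-k * (t - a)) * exp (k * ω) * r ^ (N - i).toNat := by
    intro i hi
    have hiN : i ≤ N := hθ.le_floor hω (hI i hi)
    have hNa : (N : ℝ) * ω ≤ a := (le_div_iff₀ hω).1 (Int.floor_le _)
    have hcast : (((N - i).toNat : ℕ) : ℝ) = N - i := by
      have : ((N - i).toNat : ℤ) = N - i := Int.toNat_of_nonneg (by omega)
      exact_mod_cast this
    rw [← exp_nat_mul, ← exp_add, ← exp_add, hcast]
    apply exp_le_exp.2
    nlinarith [(hθ i).2]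
  have hinj : InjOn (fun i : ℤ => (N - i).toNat) I := fun i hi j hj hij => by
    have := hθ.le_floor hω (hI i hi)
    have := hθ.le_floor hω (hI j hj)
    simp only at hij
    omega
  calc ∑ i ∈ I, exp (-k * (t - θ i))
      ≤ ∑ i ∈ I, exp (-k * (t - a)) * exp (k * ω) * r ^ (N - i).toNat := Finset.sum_le_sum hterm
    _ = ∑ n ∈ I.image fun i => (N - i).toNat, exp (-k * (t - a)) * exp (k * ω) * r ^ n :=
        (Finset.sum_image (f := fun n => exp (-k * (t - a)) * exp (k * ω) * r ^ n) hinj).symm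
    _ ≤ ∑' n : ℕ, exp (-k * (t - a)) * exp (k * ω) * r ^ n :=
        hgeom.sum_le_tsum _ fun _ _ => by positivity
    _ = exp (-k * (t - a)) * geomConst k ω := by
        rw [tsum_mul_left, tsum_geometric_of_lt_one (exp_nonneg _) hr, geomConst]; ring

lemma sum_expWeight_le (hθ : IsImpulseSeq ω θ) (hω : 0 < ω) {k : ℝ} (hk : 0 < k) (a t : ℝ)
    (u : Finset ℤ) : ∑ i ∈ u, expWeight k θ a t i ≤ exp (-k * (t - a)) * geomConst k ω := by
  simp only [expWeight, ← Finset.sum_filter]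
  exact hθ.sum_exp_le hω hk _ (fun i hi => (Finset.mem_filter.1 hi).2) t

lemma summable_expWeight (hθ : IsImpulseSeq ω θ) (hω : 0 < ω) {k : ℝ} (hk : 0 < k) (a t : ℝ) :
    Summable (expWeight k θ a t) :=
  summable_of_sum_le (expWeight_nonneg k θ a t) (hθ.sum_expWeight_le hω hk a t)

lemma tsum_expWeight_le (hθ : IsImpulseSeq ω θ) (hω : 0 < ω) {k : ℝ} (hk : 0 < k) (a t : ℝ) :
    ∑' i, expWeight k θ a t i ≤ exp (-k * (t - a)) * geomConst k ω :=
  Real.tsum_le_of_sum_le (expWeight_nonneg k θ a t) (hθ.sum_expWeight_le hω hk a t)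

end IsImpulseSeq

noncomputable def impulseTerm (k : ℝ) (θ : ℤ → ℝ) (A : ℤ → ℝ) (t : ℝ) (i : ℤ) : ℝ :=
  if θ i < t then exp (-k * (t - θ i)) * A i else 0

noncomputable def impulseSum (k : ℝ) (θ : ℤ → ℝ) (A : ℤ → ℝ) (t : ℝ) : ℝ :=
  ∑' i, impulseTerm k θ A t i

noncomputable def impulseConst (k ω Λ M : ℝ) : ℝ :=
  (k * M + Λ) * exp (k * ω) * geomConst k ω + 1 + exp (k * ω)

lemma impulseConst_nonneg {k ω Λ M : ℝ} (hk : 0 < k) (hω : 0 < ω) (hΛ : 0 ≤ Λ) (hM : 0 ≤ M) :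
    0 ≤ impulseConst k ω Λ M := by
  have := geomConst_pos hk hω
  unfold impulseConst
  positivity

section impulse

variable {k ω M : ℝ} {θ : ℤ → ℝ} {A : ℤ → ℝ}

lemma abs_impulseTerm_le (hA : ∀ i, |A i| ≤ M) (t : ℝ) (i : ℤ) :
    |impulseTerm k θ A t i| ≤ M * expWeight k θ t t i := by
  unfold impulseTerm expWeight
  by_cases h : θ i < t
  · rw [if_pos h, if_pos h.le, abs_mul, abs_of_pos (exp_pos _), mul_comm]
    exact mul_le_mul_of_nonneg_right (hA i) (exp_pos _).le
  · rw [if_neg h, abs_zero]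
    split <;> nlinarith [exp_pos (-k * (t - θ i)), abs_nonneg (A 0), hA 0]

lemma abs_impulseTerm_le_exp (hA : ∀ i, |A i| ≤ M) (t : ℝ) (i : ℤ) :
    |impulseTerm k θ A t i| ≤ M * exp (-k * (t - θ i)) := by
  unfold impulseTerm
  split
  · rw [abs_mul, abs_of_pos (exp_pos _), mul_comm]
    exact mul_le_mul_of_nonneg_right (hA i) (exp_pos _).le
  · rw [abs_zero]
    exact mul_nonneg ((abs_nonneg _).trans (hA 0)) (exp_pos _).le

lemma summable_impulseTerm (hθ : IsImpulseSeq ω θ) (hω : 0 < ω) (hk : 0 < k)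
    (hA : ∀ i, |A i| ≤ M) (t : ℝ) : Summable (impulseTerm k θ A t) :=
  ((hθ.summable_expWeight hω hk t t).mul_left M).of_norm_bounded (abs_impulseTerm_le hA t)

/-- As `θᵢ₊ₚ ≈ θᵢ + pω` and `t` is `ε`-far from every `θᵢ`, the two impulse terms are switched
on or off together. -/
lemma abs_impulseTerm_shift_sub_le_of_late (hk : 0 < k) (hω : 0 < ω) {ε Λ t : ℝ} (hε : 0 ≤ ε)
    (hεω : ε < ω) (hΛ : 0 ≤ Λ) (hA : ∀ i, |A i| ≤ M) {p i : ℤ}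
    (hθp : |θ (i + p) - θ i - p * ω| < ε) (hAp : |A (i + p) - A i| ≤ Λ * ε)
    (hgap : ε < |θ i - t|) :
    |impulseTerm k θ A (t + p * ω) (i + p) - impulseTerm k θ A t i|
      ≤ (k * M + Λ) * exp (k * ω) * ε * expWeight k θ t t i := by
  have hM : 0 ≤ M := (abs_nonneg _).trans (hA 0)
  obtain ⟨hθp₁, hθp₂⟩ := abs_lt.1 hθp
  unfold impulseTerm expWeight
  rcases lt_or_ge (θ i) t with hit | hit
  · have hit' : θ (i + p) < t + p * ω := by
      have := (lt_abs.1 hgap).resolve_left (by linarith)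
      linarith
    set δ := θ (i + p) - θ i - p * ω with hδ
    have hsplit : exp (-k * (t + p * ω - θ (i + p))) = exp (-k * (t - θ i)) * exp (k * δ) := by
      rw [← exp_add, hδ]; ring_nf
    have hexp : |exp (k * δ) - 1| ≤ k * ε * exp (k * ω) := by
      have hkδ : |k * δ| ≤ k * ε := by
        rw [abs_mul, abs_of_pos hk]; exact mul_le_mul_of_nonneg_left hθp.le hk.le
      calc |exp (k * δ) - 1| ≤ |k * δ| * exp |k * δ| := abs_exp_sub_one_le_mul_exp_abs _
        _ ≤ k * ε * exp (k * ω) :=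
          mul_le_mul hkδ (exp_le_exp.2 (by nlinarith)) (exp_pos _).le (by positivity)
    rw [if_pos hit', if_pos hit, if_pos hit.le, hsplit,
      show exp (-k * (t - θ i)) * exp (k * δ) * A (i + p) - exp (-k * (t - θ i)) * A i
        = exp (-k * (t - θ i)) * ((exp (k * δ) - 1) * A (i + p) + (A (i + p) - A i)) by ring,
      abs_mul, abs_of_pos (exp_pos _), mul_comm]
    refine mul_le_mul_of_nonneg_right ?_ (exp_pos _).le
    calc |(exp (k * δ) - 1) * A (i + p) + (A (i + p) - A i)|
        ≤ |exp (k * δ) - 1| * |A (i + p)| + |A (i + p) - A i| := by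
          rw [← abs_mul]; exact abs_add_le _ _
      _ ≤ k * ε * exp (k * ω) * M + Λ * ε * exp (k * ω) := by
          gcongr
          · exact hA _
          · exact hAp.trans (le_mul_of_one_le_right (by positivity) (one_le_exp (by positivity)))
      _ = (k * M + Λ) * exp (k * ω) * ε := by ring
  · have hit' : ¬ θ (i + p) < t + p * ω := by
      have := (lt_abs.1 hgap).resolve_right (by linarith)
      linarith
    rw [if_neg hit', if_neg (not_lt.2 hit), sub_zero, abs_zero]
    split <;> positivity

lemma abs_impulseTerm_shift_sub_le_of_early (hθ : IsImpulseSeq ω θ) (hk : 0 < k)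
    (hA : ∀ i, |A i| ≤ M) {T₁ t : ℝ} {p i : ℤ} (hi : θ i ≤ T₁) :
    |impulseTerm k θ A (t + p * ω) (i + p) - impulseTerm k θ A t i|
      ≤ (1 + exp (k * ω)) * M * expWeight k θ T₁ t i := by
  have hM : 0 ≤ M := (abs_nonneg _).trans (hA 0)
  have hshift : exp (-k * (t + p * ω - θ (i + p))) ≤ exp (k * ω) * exp (-k * (t - θ i)) := by
    rw [← exp_add]
    exact exp_le_exp.2 (by nlinarith [(abs_lt.1 (hθ.abs_sub_sub_lt i p)).2])
  rw [expWeight, if_pos hi]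
  calc |impulseTerm k θ A (t + p * ω) (i + p) - impulseTerm k θ A t i|
      ≤ |impulseTerm k θ A (t + p * ω) (i + p)| + |impulseTerm k θ A t i| := abs_sub _ _
    _ ≤ M * (exp (k * ω) * exp (-k * (t - θ i))) + M * exp (-k * (t - θ i)) := by
        gcongr
        · exact (abs_impulseTerm_le_exp hA _ _).trans (mul_le_mul_of_nonneg_left hshift hM)
        · exact abs_impulseTerm_le_exp hA _ _
    _ = (1 + exp (k * ω)) * M * exp (-k * (t - θ i)) := by ring

lemma abs_impulseTerm_shift_sub_le (hθ : IsImpulseSeq ω θ) (hω : 0 < ω) (hk : 0 < k)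
    {ε Λ T₁ t : ℝ} (hε : 0 ≤ ε) (hεω : ε < ω) (hΛ : 0 ≤ Λ) (hA : ∀ i, |A i| ≤ M) {p : ℤ}
    (hlate : ∀ i, T₁ ≤ θ i → |θ (i + p) - θ i - p * ω| < ε ∧ |A (i + p) - A i| ≤ Λ * ε)
    (hgap : ∀ i, ε < |θ i - t|) (i : ℤ) :
    |impulseTerm k θ A (t + p * ω) (i + p) - impulseTerm k θ A t i|
      ≤ (k * M + Λ) * exp (k * ω) * ε * expWeight k θ t t i
        + (1 + exp (k * ω)) * M * expWeight k θ T₁ t i := by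
  have hM : 0 ≤ M := (abs_nonneg _).trans (hA 0)
  have h₁ := mul_nonneg (by positivity : 0 ≤ (k * M + Λ) * exp (k * ω) * ε)
    (expWeight_nonneg k θ t t i)
  have h₂ := mul_nonneg (by positivity : 0 ≤ (1 + exp (k * ω)) * M) (expWeight_nonneg k θ T₁ t i)
  rcases le_or_gt T₁ (θ i) with hi | hi
  · obtain ⟨hθp, hAp⟩ := hlate i hi
    linarith [abs_impulseTerm_shift_sub_le_of_late hk hω hε hεω hΛ hA hθp hAp (hgap i)]
  · linarith [abs_impulseTerm_shift_sub_le_of_early hθ hk hA (t := t) (p := p) hi.le]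

lemma impulseSum_add_sub_eq_tsum (hθ : IsImpulseSeq ω θ) (hω : 0 < ω) (hk : 0 < k)
    (hA : ∀ i, |A i| ≤ M) (p : ℤ) (t : ℝ) :
    impulseSum k θ A (t + p * ω) - impulseSum k θ A t
      = ∑' i, (impulseTerm k θ A (t + p * ω) (i + p) - impulseTerm k θ A t i) := by
  have hshift := (Equiv.addRight p).tsum_eq (impulseTerm k θ A (t + p * ω))
  have hs : Summable fun i => impulseTerm k θ A (t + p * ω) (i + p) :=
    (summable_impulseTerm hθ hω hk hA _).comp_injective (add_left_injective p)
  simp only [Equiv.coe_addRight] at hshift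
  rw [impulseSum, impulseSum, ← hshift, ← hs.tsum_sub (summable_impulseTerm hθ hω hk hA _)]

lemma abs_impulseSum_add_sub_le (hθ : IsImpulseSeq ω θ) (hω : 0 < ω) (hk : 0 < k)
    {ε Λ T₁ t : ℝ} (hε : 0 ≤ ε) (hεω : ε < ω) (hΛ : 0 ≤ Λ) (hA : ∀ i, |A i| ≤ M) (p : ℤ)
    (hlate : ∀ i, T₁ ≤ θ i → |θ (i + p) - θ i - p * ω| < ε ∧ |A (i + p) - A i| ≤ Λ * ε)
    (hgap : ∀ i, ε < |θ i - t|) (htail : M * exp (-k * (t - T₁)) * geomConst k ω ≤ ε) :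
    |impulseSum k θ A (t + p * ω) - impulseSum k θ A t| ≤ impulseConst k ω Λ M * ε := by
  have hM : 0 ≤ M := (abs_nonneg _).trans (hA 0)
  set c₁ := (k * M + Λ) * exp (k * ω) * ε
  set c₂ := (1 + exp (k * ω)) * M
  set d := fun i => impulseTerm k θ A (t + p * ω) (i + p) - impulseTerm k θ A t i
  have hd : ∀ i, |d i| ≤ c₁ * expWeight k θ t t i + c₂ * expWeight k θ T₁ t i :=
    abs_impulseTerm_shift_sub_le hθ hω hk hε hεω hΛ hA hlate hgap
  have hw₁ := (hθ.summable_expWeight hω hk t t).mul_left c₁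
  have hw₂ := (hθ.summable_expWeight hω hk T₁ t).mul_left c₂
  have hdabs : Summable fun i => |d i| := (hw₁.add hw₂).of_nonneg_of_le (fun i => abs_nonneg _) hd
  have htail' : c₂ * (exp (-k * (t - T₁)) * geomConst k ω) ≤ (1 + exp (k * ω)) * ε := by
    calc c₂ * (exp (-k * (t - T₁)) * geomConst k ω)
        = (1 + exp (k * ω)) * (M * exp (-k * (t - T₁)) * geomConst k ω) := by ring
      _ ≤ (1 + exp (k * ω)) * ε := by gcongr
  rw [impulseSum_add_sub_eq_tsum hθ hω hk hA]
  calc |∑' i, d i| ≤ ∑' i, |d i| := by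
        simpa only [Real.norm_eq_abs] using
          norm_tsum_le_tsum_norm (f := d) (by simpa only [Real.norm_eq_abs] using hdabs)
    _ ≤ ∑' i, (c₁ * expWeight k θ t t i + c₂ * expWeight k θ T₁ t i) :=
        hdabs.tsum_le_tsum hd (hw₁.add hw₂)
    _ = c₁ * ∑' i, expWeight k θ t t i + c₂ * ∑' i, expWeight k θ T₁ t i := by
        rw [hw₁.tsum_add hw₂, tsum_mul_left, tsum_mul_left]
    _ ≤ c₁ * (exp (-k * (t - t)) * geomConst k ω) + c₂ * (exp (-k * (t - T₁)) * geomConst k ω) := by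
        gcongr
        · exact hθ.tsum_expWeight_le hω hk t t
        · exact hθ.tsum_expWeight_le hω hk T₁ t
    _ ≤ impulseConst k ω Λ M * ε := by
        rw [sub_self, mul_zero, exp_zero, one_mul, impulseConst]
        linarith

end impulse

noncomputable def expConv (k : ℝ) (G : ℝ → ℝ) (t : ℝ) : ℝ :=
  ∫ s in Iic t, exp (-k * (t - s)) * G s

noncomputable def convConst (k ω L M : ℝ) : ℝ :=
  1 + L / k + 4 * M * exp (2 * k * ω) * geomConst k ω

lemma convConst_nonneg {k ω L M : ℝ} (hk : 0 < k) (hω : 0 < ω) (hL : 0 ≤ L) (hM : 0 ≤ M) :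
    0 ≤ convConst k ω L M := by
  have := geomConst_pos hk hω
  unfold convConst
  positivity

section conv

variable {k : ℝ}

lemma exp_neg_mul_sub_eq (k t s : ℝ) : exp (-k * (t - s)) = exp (-(k * t)) * exp (k * s) := by
  rw [← exp_add]; ring_nf

lemma integrableOn_exp_neg_mul_sub (hk : 0 < k) (t a : ℝ) :
    IntegrableOn (fun s => exp (-k * (t - s))) (Iic a) := by
  simp_rw [exp_neg_mul_sub_eq k t]
  exact (integrableOn_exp_mul_Iic hk a).const_mul _

lemma integral_exp_neg_mul_sub (hk : 0 < k) (t a : ℝ) :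
    ∫ s in Iic a, exp (-k * (t - s)) = exp (-k * (t - a)) / k := by
  simp_rw [exp_neg_mul_sub_eq k t]
  rw [integral_const_mul, integral_exp_mul_Iic hk, mul_div_assoc]

lemma integrableOn_exp_neg_mul_sub_mul (hk : 0 < k) {G : ℝ → ℝ} {M : ℝ} (hGm : Measurable G)
    (hGM : ∀ s, |G s| ≤ M) (t : ℝ) :
    IntegrableOn (fun s => exp (-k * (t - s)) * G s) (Iic t) :=
  (integrableOn_exp_neg_mul_sub hk t t).mul_bdd hGm.aestronglyMeasurable
    (ae_of_all _ fun s => hGM s)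

lemma expConv_add (G : ℝ → ℝ) (t c : ℝ) :
    expConv k G (t + c) = ∫ s in Iic t, exp (-k * (t - s)) * G (s + c) := by
  rw [expConv, ← (measurePreserving_add_right volume c).setIntegral_preimage_emb
    (measurableEmbedding_addRight c), preimage_add_const_Iic, add_sub_cancel_right]
  simp_rw [add_sub_add_right_eq_sub]

lemma integral_indicator_Icc_exp_le (hk : 0 ≤ k) {ε : ℝ} (hε : 0 ≤ ε) (x t : ℝ) :
    ∫ s in Iic t, (Icc (x - ε) (x + ε)).indicator (fun s => exp (-k * (t - s))) s
      ≤ 2 * ε * exp (k * ε) * exp (-k * (t - x)) := by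
  rw [setIntegral_indicator measurableSet_Icc]
  have hbound : ∀ s ∈ Iic t ∩ Icc (x - ε) (x + ε),
      ‖exp (-k * (t - s))‖ ≤ exp (k * ε) * exp (-k * (t - x)) := fun s hs => by
    rw [norm_of_nonneg (exp_pos _).le, ← exp_add]
    exact exp_le_exp.2 (by nlinarith [hs.2.2])
  have hvol : volume.real (Iic t ∩ Icc (x - ε) (x + ε)) ≤ 2 * ε := by
    calc volume.real (Iic t ∩ Icc (x - ε) (x + ε)) ≤ volume.real (Icc (x - ε) (x + ε)) :=
          measureReal_mono inter_subset_right measure_Icc_lt_top.ne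
      _ = 2 * ε := by rw [Real.volume_real_Icc]; exact max_eq_left (by linarith) |>.trans (by ring)
  calc ∫ s in Iic t ∩ Icc (x - ε) (x + ε), exp (-k * (t - s))
      ≤ (exp (k * ε) * exp (-k * (t - x))) * volume.real (Iic t ∩ Icc (x - ε) (x + ε)) :=
        (le_abs_self _).trans (norm_setIntegral_le_of_norm_le_const
          ((measure_mono inter_subset_right).trans_lt measure_Icc_lt_top) hbound)
    _ ≤ 2 * ε * exp (k * ε) * exp (-k * (t - x)) := by
        nlinarith [mul_pos (exp_pos (k * ε)) (exp_pos (-k * (t - x)))]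

end conv

lemma IsImpulseSeq.mul_le_add_indicator {ω ε L B T₁ t : ℝ} {θ : ℤ → ℝ} (hθ : IsImpulseSeq ω θ)
    (hω : 0 < ω) (hε : 0 ≤ ε) (hL : 0 ≤ L) {H κ : ℝ → ℝ} (hH0 : ∀ s, 0 ≤ H s)
    (hHB : ∀ s, H s ≤ B)
    (hgood : ∀ s, T₁ ≤ s → ∀ i, θ i + ε < s → s < θ (i + 1) - ε → H s ≤ L * ε)
    (hκ : ∀ s, 0 ≤ κ s) {I : Finset ℤ} (hI : ∀ i, θ i ∈ Icc (T₁ - ε) (t + ε) → i ∈ I)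
    {s : ℝ} (hst : s ≤ t) :
    κ s * H s ≤ L * ε * κ s + B * (Iic T₁).indicator κ s
      + B * ∑ i ∈ I, (Icc (θ i - ε) (θ i + ε)).indicator κ s := by
  have hB : 0 ≤ B := (hH0 0).trans (hHB 0)
  have hκB : κ s * H s ≤ B * κ s := by nlinarith [hHB s, hκ s]
  have hgood0 : 0 ≤ L * ε * κ s := mul_nonneg (mul_nonneg hL hε) (hκ s)
  have htail0 : 0 ≤ B * (Iic T₁).indicator κ s :=
    mul_nonneg hB (indicator_nonneg (fun s _ => hκ s) s)
  have hbad0 : 0 ≤ B * ∑ i ∈ I, (Icc (θ i - ε) (θ i + ε)).indicator κ s :=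
    mul_nonneg hB (Finset.sum_nonneg fun i _ => indicator_nonneg (fun s _ => hκ s) s)
  by_cases hs : s ≤ T₁
  · rw [indicator_of_mem (mem_Iic.2 hs)]
    linarith
  by_cases hgap : ∃ i, θ i + ε < s ∧ s < θ (i + 1) - ε
  · obtain ⟨i, hi₁, hi₂⟩ := hgap
    nlinarith [hgood s (not_le.1 hs).le i hi₁ hi₂, hκ s]
  simp only [not_exists, not_and] at hgap
  obtain ⟨i, hi⟩ := hθ.exists_abs_sub_le_of_notMem_gap hω hgap
  obtain ⟨hi₁, hi₂⟩ := abs_le.1 hi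
  have hsingle : κ s ≤ ∑ i ∈ I, (Icc (θ i - ε) (θ i + ε)).indicator κ s := by
    calc κ s = (Icc (θ i - ε) (θ i + ε)).indicator κ s :=
          (indicator_of_mem (show s ∈ Icc (θ i - ε) (θ i + ε) from
            ⟨by linarith, by linarith⟩) κ).symm
      _ ≤ _ := Finset.single_le_sum (f := fun i => (Icc (θ i - ε) (θ i + ε)).indicator κ s)
          (fun i _ => indicator_nonneg (fun s _ => hκ s) s)
          (hI i ⟨by linarith [not_le.1 hs], by linarith⟩)
  nlinarith

lemma IsImpulseSeq.integral_sum_indicator_le {k ω ε t : ℝ} {θ : ℤ → ℝ} (hθ : IsImpulseSeq ω θ)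
    (hω : 0 < ω) (hk : 0 < k) (hε : 0 ≤ ε) (I : Finset ℤ) (hI : ∀ i ∈ I, θ i ≤ t + ε) :
    ∫ s in Iic t, ∑ i ∈ I, (Icc (θ i - ε) (θ i + ε)).indicator (fun s => exp (-k * (t - s))) s
      ≤ 2 * ε * exp (2 * k * ε) * geomConst k ω := by
  calc ∫ s in Iic t, ∑ i ∈ I, (Icc (θ i - ε) (θ i + ε)).indicator (fun s => exp (-k * (t - s))) s
      = ∑ i ∈ I, ∫ s in Iic t,
          (Icc (θ i - ε) (θ i + ε)).indicator (fun s => exp (-k * (t - s))) s :=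
        integral_finsetSum _ fun i _ =>
          (integrableOn_exp_neg_mul_sub hk t t).indicator measurableSet_Icc
    _ ≤ ∑ i ∈ I, 2 * ε * exp (k * ε) * exp (-k * (t - θ i)) :=
        Finset.sum_le_sum fun i _ => integral_indicator_Icc_exp_le hk.le hε _ _
    _ = 2 * ε * exp (k * ε) * ∑ i ∈ I, exp (-k * (t - θ i)) := by rw [Finset.mul_sum]
    _ ≤ 2 * ε * exp (k * ε) * (exp (-k * (t - (t + ε))) * geomConst k ω) := by
        gcongr
        exact hθ.sum_exp_le hω hk I hI t
    _ = 2 * ε * exp (2 * k * ε) * geomConst k ω := by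
        rw [show 2 * k * ε = k * ε + -k * (t - (t + ε)) by ring, exp_add]; ring

lemma IsImpulseSeq.integral_exp_mul_le {k ω ε L B T₁ t : ℝ} {θ : ℤ → ℝ} (hθ : IsImpulseSeq ω θ)
    (hω : 0 < ω) (hk : 0 < k) (hε : 0 ≤ ε) (hL : 0 ≤ L) {H : ℝ → ℝ} (hH0 : ∀ s, 0 ≤ H s)
    (hHB : ∀ s, H s ≤ B)
    (hgood : ∀ s, T₁ ≤ s → ∀ i, θ i + ε < s → s < θ (i + 1) - ε → H s ≤ L * ε) (hT : T₁ ≤ t) :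
    ∫ s in Iic t, exp (-k * (t - s)) * H s
      ≤ L * ε / k + B * exp (-k * (t - T₁)) / k + 2 * B * ε * exp (2 * k * ε) * geomConst k ω := by
  set κ : ℝ → ℝ := fun s => exp (-k * (t - s))
  set I := (hθ.finite_setOf_mem_Icc hω (T₁ - ε) (t + ε)).toFinset
  set bad : ℝ → ℝ := fun s => ∑ i ∈ I, (Icc (θ i - ε) (θ i + ε)).indicator κ s
  have hκ : IntegrableOn κ (Iic t) := integrableOn_exp_neg_mul_sub hk t t
  have hind : IntegrableOn ((Iic T₁).indicator κ) (Iic t) := hκ.indicator measurableSet_Iic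
  have hbad : IntegrableOn bad (Iic t) :=
    integrable_finsetSum _ fun i _ => hκ.indicator measurableSet_Icc
  have hmono : ∫ s in Iic t, κ s * H s
      ≤ ∫ s in Iic t, (L * ε * κ s + B * (Iic T₁).indicator κ s + B * bad s) :=
    integral_mono_of_nonneg (ae_of_all _ fun s => mul_nonneg (exp_pos _).le (hH0 s))
      (((hκ.const_mul _).add (hind.const_mul B)).add (hbad.const_mul B))
      (ae_restrict_of_forall_mem measurableSet_Iic fun s hs =>
        hθ.mul_le_add_indicator hω hε hL hH0 hHB hgood (fun s => (exp_pos _).le)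
          (fun i hi => (Set.Finite.mem_toFinset _).2 hi) hs)
  have htail : ∫ s in Iic t, (Iic T₁).indicator κ s = exp (-k * (t - T₁)) / k := by
    rw [setIntegral_indicator measurableSet_Iic, Iic_inter_Iic, min_eq_right hT,
      integral_exp_neg_mul_sub hk]
  have hbadI : ∫ s in Iic t, bad s ≤ 2 * ε * exp (2 * k * ε) * geomConst k ω :=
    hθ.integral_sum_indicator_le hω hk hε I fun i hi => ((Set.Finite.mem_toFinset _).1 hi).2
  rw [integral_add (f := fun s => L * ε * κ s + B * (Iic T₁).indicator κ s)
      ((hκ.const_mul _).add (hind.const_mul B)) (hbad.const_mul B),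
    integral_add (f := fun s => L * ε * κ s) (hκ.const_mul _) (hind.const_mul B),
    integral_const_mul, integral_const_mul, integral_const_mul, integral_exp_neg_mul_sub hk, htail,
    sub_self, mul_zero, exp_zero] at hmono
  have hB : 0 ≤ B := (hH0 0).trans (hHB 0)
  calc ∫ s in Iic t, κ s * H s
      ≤ L * ε * (1 / k) + B * (exp (-k * (t - T₁)) / k) + B * ∫ s in Iic t, bad s := hmono
    _ ≤ L * ε * (1 / k) + B * (exp (-k * (t - T₁)) / k)
        + B * (2 * ε * exp (2 * k * ε) * geomConst k ω) := by gcongr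
    _ = _ := by ring

lemma IsImpulseSeq.abs_expConv_add_sub_le {k ω ε L M T₁ t : ℝ} {θ : ℤ → ℝ}
    (hθ : IsImpulseSeq ω θ) (hω : 0 < ω) (hk : 0 < k) (hε : 0 ≤ ε) (hεω : ε ≤ ω) (hL : 0 ≤ L)
    {G : ℝ → ℝ} (hGm : Measurable G) (hGM : ∀ s, |G s| ≤ M) (c : ℝ)
    (hgood : ∀ s, T₁ ≤ s → ∀ i, θ i + ε < s → s < θ (i + 1) - ε → |G (s + c) - G s| ≤ L * ε)
    (hT : T₁ ≤ t) (htail : 2 * exp (-k * (t - T₁)) * (M / k) ≤ ε) :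
    |expConv k G (t + c) - expConv k G t| ≤ convConst k ω L M * ε := by
  have hM : 0 ≤ M := (abs_nonneg _).trans (hGM 0)
  have hdiff : expConv k G (t + c) - expConv k G t
      = ∫ s in Iic t, exp (-k * (t - s)) * (G (s + c) - G s) := by
    rw [expConv_add, expConv, ← integral_sub
      (integrableOn_exp_neg_mul_sub_mul hk (G := fun s => G (s + c))
        (hGm.comp (measurable_add_const c)) (fun s => hGM _) t)
      (integrableOn_exp_neg_mul_sub_mul hk hGm hGM t)]
    simp_rw [mul_sub]
  have hkernel := hθ.integral_exp_mul_le hω hk hε hL (H := fun s => |G (s + c) - G s|)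
    (B := 2 * M) (fun s => abs_nonneg _)
    (fun s => (abs_sub _ _).trans (by linarith [hGM (s + c), hGM s])) hgood hT
  have hexp : exp (2 * k * ε) ≤ exp (2 * k * ω) := exp_le_exp.2 (by nlinarith)
  have hgeom := (geomConst_pos hk hω).le
  rw [hdiff]
  calc |∫ s in Iic t, exp (-k * (t - s)) * (G (s + c) - G s)|
      ≤ ∫ s in Iic t, |exp (-k * (t - s)) * (G (s + c) - G s)| := abs_integral_le_integral_abs
    _ = ∫ s in Iic t, exp (-k * (t - s)) * |G (s + c) - G s| := by simp_rw [abs_mul, abs_exp]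
    _ ≤ L * ε / k + 2 * M * exp (-k * (t - T₁)) / k
        + 2 * (2 * M) * ε * exp (2 * k * ε) * geomConst k ω := hkernel
    _ ≤ L / k * ε + ε + 4 * M * exp (2 * k * ω) * geomConst k ω * ε := by
        have : 2 * M * exp (-k * (t - T₁)) / k = 2 * exp (-k * (t - T₁)) * (M / k) := by ring
        have : 4 * M * ε * exp (2 * k * ε) * geomConst k ω
            ≤ 4 * M * ε * exp (2 * k * ω) * geomConst k ω := by gcongr
        linarith [div_mul_eq_mul_div L k ε]
    _ = convConst k ω L M * ε := by rw [convConst]; ring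

lemma abs_le_eNorm {n : ℕ} (v : Fin n → ℝ) (j : Fin n) : |v j| ≤ eNorm v := by
  rw [eNorm, ← sqrt_sq_eq_abs]
  exact sqrt_le_sqrt (Finset.single_le_sum (fun i _ => sq_nonneg (v i)) (Finset.mem_univ j))

lemma eNorm_le_sum_abs {n : ℕ} (v : Fin n → ℝ) : eNorm v ≤ ∑ j, |v j| := by
  rw [eNorm, sqrt_le_left (Finset.sum_nonneg fun j _ => abs_nonneg _)]
  simpa only [sq_abs] using
    Finset.sum_sq_le_sq_sum_of_nonneg (s := Finset.univ) fun j _ => abs_nonneg (v j)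

lemma continuous_of_abs_sub_le_eNorm {n : ℕ} {f : (Fin n → ℝ) → ℝ} {L : ℝ} (hL : 0 ≤ L)
    (hf : ∀ z w, |f z - f w| ≤ L * eNorm (fun i => z i - w i)) : Continuous f := by
  refine (LipschitzWith.of_dist_le_mul (K := ⟨L * n, by positivity⟩) fun z w => ?_).continuous
  calc dist (f z) (f w) ≤ L * eNorm (fun i => z i - w i) := hf z w
    _ ≤ L * ∑ i, dist z w := by
        gcongr
        exact (eNorm_le_sum_abs _).trans
          (Finset.sum_le_sum fun i _ => dist_le_pi_dist z w i)
    _ = L * n * dist z w := by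
        rw [Finset.sum_const, Finset.card_univ, Fintype.card_fin, nsmul_eq_mul]; ring

lemma abs_sub_sub_sub_le {a b c d ε : ℝ} (h₁ : |a - c| ≤ ε) (h₂ : |b - d| ≤ ε) :
    |(a - b) - (c - d)| ≤ 2 * ε := by
  rw [abs_le] at *
  constructor <;> linarith

lemma abs_map_sub_zero_sub_le {n : ℕ} {f : (Fin n → ℝ) → ℝ} {L ε : ℝ} (hL : 0 ≤ L)
    (hf : ∀ z w, |f z - f w| ≤ L * eNorm (fun i => z i - w i)) {u v : Fin (n + 1) → ℝ}
    (huv : eNorm (fun j => u j - v j) ≤ ε) :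
    |f (fun i => u 0 - u i.succ) - f (fun i => v 0 - v i.succ)| ≤ 2 * n * L * ε :=
  calc _ ≤ L * eNorm _ := hf _ _
    _ ≤ L * ∑ _i : Fin n, 2 * ε := by
        gcongr
        exact (eNorm_le_sum_abs _).trans (Finset.sum_le_sum fun i _ => abs_sub_sub_sub_le
          ((abs_le_eNorm _ 0).trans huv) ((abs_le_eNorm _ i.succ).trans huv))
    _ = 2 * n * L * ε := by
        rw [Finset.sum_const, Finset.card_univ, Fintype.card_fin, nsmul_eq_mul]; ring

section model

variable {m : ℕ} {ω I₀ lJ mJ ε T₁ T₂ t : ℝ} {θ : ℤ → ℝ} {k l mc : Fin (m + 1) → ℝ}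
  {g₀ : (Fin m → ℝ) → ℝ} {g : Fin (m + 1) → ℝ → ℝ} {J₀ : ℝ → ℝ} {φ : ℝ → Fin (m + 1) → ℝ}

lemma Tmap_zero (t : ℝ) :
    Tmap m θ k I₀ g₀ g J₀ φ t 0 = -expConv (k 0) (fun s => g₀ fun i => φ s 0 - φ s i.succ) t
      + impulseSum (k 0) θ (fun i => I₀ + J₀ (φ (θ i) 0)) t :=
  if_pos rfl

lemma Tmap_of_ne_zero {j : Fin (m + 1)} (hj : j ≠ 0) (t : ℝ) :
    Tmap m θ k I₀ g₀ g J₀ φ t j = expConv (k j) (fun s => g j (φ s 0 - φ s j)) t :=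
  if_neg hj

lemma abs_Tmap_sub_le_of_ne_zero (hθ : IsImpulseSeq ω θ) (hω : 0 < ω) {j : Fin (m + 1)}
    (hj : j ≠ 0) (hk : 0 < k j) (hl : 0 ≤ l j) (hglip : ∀ a b, |g j a - g j b| ≤ l j * |a - b|)
    (hgbd : ∀ a, |g j a| ≤ mc j) (hφ : Measurable φ) {p : ℕ} (hε : 0 ≤ ε) (hεω : ε ≤ ω)
    (hgood : ∀ s, T₁ ≤ s → ∀ i, θ i + ε < s → s < θ (i + 1) - ε →
      eNorm (fun j => φ (s + p * ω) j - φ s j) < ε)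
    (hT : T₁ ≤ T₂) (htail : 4 * exp (-(k j) * (T₂ - T₁)) * (mc j / k j) < ε) (ht : T₂ ≤ t) :
    |Tmap m θ k I₀ g₀ g J₀ φ (t + p * ω) j - Tmap m θ k I₀ g₀ g J₀ φ t j|
      ≤ convConst (k j) ω (2 * l j) (mc j) * ε := by
  have hmc : 0 ≤ mc j / k j := div_nonneg ((abs_nonneg _).trans (hgbd 0)) hk.le
  have hexp : exp (-(k j) * (t - T₁)) ≤ exp (-(k j) * (T₂ - T₁)) := exp_le_exp.2 (by nlinarith)
  have hgc : Continuous (g j) :=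
    (LipschitzWith.of_dist_le_mul (K := ⟨l j, hl⟩) fun a b => hglip a b).continuous
  rw [Tmap_of_ne_zero hj, Tmap_of_ne_zero hj]
  refine hθ.abs_expConv_add_sub_le hω hk hε hεω (by positivity)
    (hgc.measurable.comp (by fun_prop)) (fun s => hgbd _) _ (fun s hs i h₁ h₂ => ?_) (hT.trans ht)
    (by nlinarith [exp_pos (-(k j) * (T₂ - T₁))])
  have hφs := (hgood s hs i h₁ h₂).le
  calc |g j (φ (s + p * ω) 0 - φ (s + p * ω) j) - g j (φ s 0 - φ s j)|
      ≤ l j * |(φ (s + p * ω) 0 - φ (s + p * ω) j) - (φ s 0 - φ s j)| := hglip _ _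
    _ ≤ l j * (2 * ε) := by
        gcongr
        exact abs_sub_sub_sub_le ((abs_le_eNorm _ 0).trans hφs) ((abs_le_eNorm _ j).trans hφs)
    _ = 2 * l j * ε := by ring

lemma abs_Tmap_zero_sub_le (hθ : IsImpulseSeq ω θ) (hω : 0 < ω) (hk : 0 < k 0) (hI : 0 < I₀)
    (hl : 0 ≤ l 0) (hlJ : 0 ≤ lJ) (hmc : 0 ≤ mc 0) (hmJ : 0 ≤ mJ)
    (hg₀lip : ∀ z w : Fin m → ℝ, |g₀ z - g₀ w| ≤ l 0 * eNorm (fun i => z i - w i))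
    (hJlip : ∀ a b, |J₀ a - J₀ b| ≤ lJ * |a - b|) (hg₀bd : ∀ z, |g₀ z| ≤ mc 0)
    (hJbd : ∀ a, |J₀ a| ≤ mJ) (hφ : Measurable φ) {p : ℕ} (hε : 0 ≤ ε) (hεω : ε < ω)
    (hshift : ∀ i : ℤ, T₁ ≤ θ i → |θ (i + p) - θ i - p * ω| < ε ∧
      eNorm (fun j => φ (θ (i + p)) j - φ (θ i) j) < ε)
    (hgood : ∀ s, T₁ ≤ s → ∀ i, θ i + ε < s → s < θ (i + 1) - ε →
      eNorm (fun j => φ (s + p * ω) j - φ s j) < ε)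
    (hT : T₁ ≤ T₂) (htail : 2 * exp (-(k 0) * (T₂ - T₁))
      * (mc 0 / k 0 + (I₀ + mJ) * exp (k 0 * ω) / (1 - exp (-(k 0) * ω))) < ε)
    (ht : T₂ ≤ t) (hgap : ∀ i, ε < |θ i - t|) :
    |Tmap m θ k I₀ g₀ g J₀ φ (t + p * ω) 0 - Tmap m θ k I₀ g₀ g J₀ φ t 0|
      ≤ (convConst (k 0) ω (2 * m * l 0) (mc 0) + impulseConst (k 0) ω lJ (I₀ + mJ)) * ε := by
  have hexp : exp (-(k 0) * (t - T₁)) ≤ exp (-(k 0) * (T₂ - T₁)) := exp_le_exp.2 (by nlinarith)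
  have hmk : 0 ≤ mc 0 / k 0 := by positivity
  have hIE : 0 ≤ (I₀ + mJ) * geomConst (k 0) ω :=
    mul_nonneg (by linarith) (geomConst_pos hk hω).le
  rw [mul_div_assoc, show exp (k 0 * ω) / (1 - exp (-(k 0) * ω)) = geomConst (k 0) ω from rfl]
    at htail
  have hg₀ : Measurable fun s => g₀ fun i => φ s 0 - φ s i.succ :=
    (continuous_of_abs_sub_le_eNorm hl hg₀lip).measurable.comp (by fun_prop)
  have hconv := hθ.abs_expConv_add_sub_le hω hk hε hεω.le (by positivity) hg₀
    (fun s => hg₀bd _) (p * ω)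
    (fun s hs i h₁ h₂ => abs_map_sub_zero_sub_le hl hg₀lip (hgood s hs i h₁ h₂).le)
    (hT.trans ht) (by nlinarith [exp_pos (-(k 0) * (T₂ - T₁))])
  have himp := abs_impulseSum_add_sub_le hθ hω hk hε hεω hlJ (A := fun i => I₀ + J₀ (φ (θ i) 0))
    (M := I₀ + mJ)
    (fun i => (abs_add_le _ _).trans (by rw [abs_of_pos hI]; linarith [hJbd (φ (θ i) 0)]))
    p (fun i hi => ⟨by exact_mod_cast (hshift i hi).1, by
      rw [add_sub_add_left_eq_sub]
      exact (hJlip _ _).trans (mul_le_mul_of_nonneg_left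
        ((abs_le_eNorm _ 0).trans (hshift i hi).2.le) hlJ)⟩)
    hgap (by nlinarith [exp_pos (-(k 0) * (T₂ - T₁))])
  rw [Int.cast_natCast] at himp
  rw [Tmap_zero, Tmap_zero, neg_add_eq_sub, neg_add_eq_sub, sub_sub_sub_comm, add_mul]
  exact (abs_sub _ _).trans (by rw [add_comm]; exact add_le_add hconv himp)

end model

theorem stmt7_general
    (m : ℕ) (ω : ℝ) (hω : 0 < ω) (θ : ℤ → ℝ)
    (hθ : ∀ i : ℤ, (i : ℝ) * ω ≤ θ i ∧ θ i < ((i : ℝ) + 1) * ω)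
    (k : Fin (m + 1) → ℝ) (hk : ∀ j, 0 < k j) (I₀ : ℝ) (hI : 0 < I₀)
    (g₀ : (Fin m → ℝ) → ℝ) (g : Fin (m + 1) → ℝ → ℝ) (J₀ : ℝ → ℝ)
    (l : Fin (m + 1) → ℝ) (lJ : ℝ) (mc : Fin (m + 1) → ℝ) (mJ : ℝ)
    (hl : ∀ j, 0 ≤ l j) (hlJ : 0 ≤ lJ) (hmc : ∀ j, 0 ≤ mc j) (hmJ : 0 ≤ mJ)
    (hg₀lip : ∀ z w : Fin m → ℝ, |g₀ z - g₀ w| ≤ l 0 * eNorm (fun i => z i - w i))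
    (hglip : ∀ j, j ≠ 0 → ∀ a b : ℝ, |g j a - g j b| ≤ l j * |a - b|)
    (hJlip : ∀ a b : ℝ, |J₀ a - J₀ b| ≤ lJ * |a - b|)
    (hg₀bd : ∀ z, |g₀ z| ≤ mc 0)
    (hgbd : ∀ j, j ≠ 0 → ∀ a, |g j a| ≤ mc j)
    (hJbd : ∀ a, |J₀ a| ≤ mJ)
 :
    ∃ C : ℝ, 0 ≤ C ∧
      ∀ (p : ℕ), 1 ≤ p → ∀ ε : ℝ, 0 < ε → ε < ω / 4 →
      ∀ φ : ℝ → Fin (m + 1) → ℝ, φ ∈ OmegaSet m ω k mc I₀ mJ →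
      ∀ T₁ T₂ : ℝ, T₁ < T₂ →
      (∀ i : ℤ, T₁ ≤ θ i →
        |θ (i + (p : ℤ)) - θ i - (p : ℝ) * ω| < ε ∧
        eNorm (fun j => φ (θ (i + (p : ℤ))) j - φ (θ i) j) < ε) →
      (∀ s : ℝ, T₁ ≤ s → ∀ i : ℤ, θ i + ε < s → s < θ (i + 1) - ε →
        θ (i + (p : ℤ)) < s + (p : ℝ) * ω ∧ s + (p : ℝ) * ω < θ (i + (p : ℤ) + 1) ∧
        eNorm (fun j => φ (s + (p : ℝ) * ω) j - φ s j) < ε) →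
      (2 * Real.exp (-(k 0) * (T₂ - T₁)) * (mc 0 / k 0 + (I₀ + mJ) * Real.exp (k 0 * ω) / (1 - Real.exp (-(k 0) * ω))) < ε) →
      (∀ j, j ≠ 0 → 4 * Real.exp (-(k j) * (T₂ - T₁)) * (mc j / k j) < ε) →
      ∀ t : ℝ, T₂ ≤ t → ∀ i : ℤ, θ i + ε < t → t < θ (i + 1) - ε →
        eNorm (fun j =>
          Tmap m θ k I₀ g₀ g J₀ φ (t + (p : ℝ) * ω) j - Tmap m θ k I₀ g₀ g J₀ φ t j) ≤ C * ε := by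
  have hθ' : IsImpulseSeq ω θ := hθ
  refine ⟨convConst (k 0) ω (2 * m * l 0) (mc 0) + impulseConst (k 0) ω lJ (I₀ + mJ)
      + ∑ j : Fin m, convConst (k j.succ) ω (2 * l j.succ) (mc j.succ),
    add_nonneg (add_nonneg (convConst_nonneg (hk 0) hω (by have := hl 0; positivity) (hmc 0))
      (impulseConst_nonneg (hk 0) hω hlJ (by linarith)))
      (Finset.sum_nonneg fun j _ =>
        convConst_nonneg (hk _) hω (by linarith [hl j.succ]) (hmc _)), ?_⟩
  intro p _ ε hε hεω φ hφ T₁ T₂ hT hshift hgaps htail₀ htail t ht i₀ ht₁ ht₂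
  have hgood := fun s hs i h₁ h₂ => (hgaps s hs i h₁ h₂).2.2
  have hεω' : ε < ω := by linarith
  calc eNorm _
      ≤ ∑ j, |Tmap m θ k I₀ g₀ g J₀ φ (t + p * ω) j - Tmap m θ k I₀ g₀ g J₀ φ t j| :=
        eNorm_le_sum_abs _
    _ = |Tmap m θ k I₀ g₀ g J₀ φ (t + p * ω) 0 - Tmap m θ k I₀ g₀ g J₀ φ t 0|
        + ∑ j : Fin m, |Tmap m θ k I₀ g₀ g J₀ φ (t + p * ω) j.succ
          - Tmap m θ k I₀ g₀ g J₀ φ t j.succ| := Fin.sum_univ_succ _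
    _ ≤ (convConst (k 0) ω (2 * m * l 0) (mc 0) + impulseConst (k 0) ω lJ (I₀ + mJ)) * ε
        + ∑ j : Fin m, convConst (k j.succ) ω (2 * l j.succ) (mc j.succ) * ε :=
        add_le_add
          (abs_Tmap_zero_sub_le hθ' hω (hk 0) hI (hl 0) hlJ (hmc 0) hmJ hg₀lip hJlip hg₀bd hJbd
            hφ.1 hε.le hεω' hshift hgood hT.le htail₀ ht (hθ'.lt_abs_sub_of_mem_gap ht₁ ht₂))
          (Finset.sum_le_sum fun j _ => abs_Tmap_sub_le_of_ne_zero hθ' hω (Fin.succ_ne_zero j)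
            (hk _) (hl _) (hglip _ (Fin.succ_ne_zero j)) (hgbd _ (Fin.succ_ne_zero j)) hφ.1
            hε.le hεω'.le hgood hT.le (htail _ (Fin.succ_ne_zero j)) ht)
    _ = _ := by rw [← Finset.sum_mul]; ring

/-- There exists a constant `C ≥ 0`, depending only on the data
`m, ω, k, l, l_J, m₀,…,m_m, m_J, I₀` (not on `p, ε, φ, T₁, T₂, t`), such that under the
eventual `p`-property hypotheses (i)–(iii) one has
`‖(Tφ)(t + pω) − (Tφ)(t)‖ ≤ C·ε` for every `t ≥ T₂` lying `ε`-inside an interval of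
continuity (the key estimate for eventually `pω`-periodic solutions, Theorem 1, assertion 2). -/
theorem stmt7
    (m : ℕ) (hm : 1 ≤ m) (ω : ℝ) (hω : 0 < ω) (θ : ℤ → ℝ)
    (hθ : ∀ i : ℤ, (i : ℝ) * ω ≤ θ i ∧ θ i < ((i : ℝ) + 1) * ω)
    (k : Fin (m + 1) → ℝ) (hk : ∀ j, 0 < k j) (I₀ : ℝ) (hI : 0 < I₀)
    (g₀ : (Fin m → ℝ) → ℝ) (g : Fin (m + 1) → ℝ → ℝ) (J₀ : ℝ → ℝ)
    (l : Fin (m + 1) → ℝ) (lJ : ℝ) (mc : Fin (m + 1) → ℝ) (mJ : ℝ)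
    (hl : ∀ j, 0 ≤ l j) (hlJ : 0 ≤ lJ) (hmc : ∀ j, 0 ≤ mc j) (hmJ : 0 ≤ mJ)
    (hg₀lip : ∀ z w : Fin m → ℝ, |g₀ z - g₀ w| ≤ l 0 * eNorm (fun i => z i - w i))
    (hglip : ∀ j, j ≠ 0 → ∀ a b : ℝ, |g j a - g j b| ≤ l j * |a - b|)
    (hJlip : ∀ a b : ℝ, |J₀ a - J₀ b| ≤ lJ * |a - b|)
    (hg₀bd : ∀ z, |g₀ z| ≤ mc 0)
    (hgbd : ∀ j, j ≠ 0 → ∀ a, |g j a| ≤ mc j)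
    (hJbd : ∀ a, |J₀ a| ≤ mJ)
 :
    ∃ C : ℝ, 0 ≤ C ∧
      ∀ (p : ℕ), 1 ≤ p → ∀ ε : ℝ, 0 < ε → ε < ω / 4 →
      ∀ φ : ℝ → Fin (m + 1) → ℝ, φ ∈ OmegaSet m ω k mc I₀ mJ →
      ∀ T₁ T₂ : ℝ, T₁ < T₂ →
      (∀ i : ℤ, T₁ ≤ θ i →
        |θ (i + (p : ℤ)) - θ i - (p : ℝ) * ω| < ε ∧
        eNorm (fun j => φ (θ (i + (p : ℤ))) j - φ (θ i) j) < ε) →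
      (∀ s : ℝ, T₁ ≤ s → ∀ i : ℤ, θ i + ε < s → s < θ (i + 1) - ε →
        θ (i + (p : ℤ)) < s + (p : ℝ) * ω ∧ s + (p : ℝ) * ω < θ (i + (p : ℤ) + 1) ∧
        eNorm (fun j => φ (s + (p : ℝ) * ω) j - φ s j) < ε) →
      (2 * Real.exp (-(k 0) * (T₂ - T₁)) * (mc 0 / k 0 + (I₀ + mJ) * Real.exp (k 0 * ω) / (1 - Real.exp (-(k 0) * ω))) < ε) →
      (∀ j, j ≠ 0 → 4 * Real.exp (-(k j) * (T₂ - T₁)) * (mc j / k j) < ε) →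
      ∀ t : ℝ, T₂ ≤ t → ∀ i : ℤ, θ i + ε < t → t < θ (i + 1) - ε →
        eNorm (fun j =>
          Tmap m θ k I₀ g₀ g J₀ φ (t + (p : ℝ) * ω) j - Tmap m θ k I₀ g₀ g J₀ φ t j) ≤ C * ε :=
  stmt7_general m ω hω θ hθ k hk I₀ hI g₀ g J₀ l lJ mc mJ hl hlJ hmc hmJ hg₀lip hglip hJlip hg₀bd
    hgbd hJbd
end
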